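/- Let r ≥ 1 be an integer, ε ∈ (0, 1), and let V̂ : ℤ³ → ℝ satisfy: V̂(k) = 0 for |k| > r; V̂(−k) = V̂(k); V̂(0) = 0; V̂(k) = V̂(k') whenever |k| = |k'| (rotational symmetry); and V̂((0,0,m)) > 0 for every integer m with 1 ≤ m ≤ r. Then there exist constants C > 0 and P₀ ≥ 1, depending only on r, ε and V̂, such that the following holds for every p_F ≥ P₀: if H ⊂ {h ∈ ℤ³ : |h| < p_F − 3r} and P ⊂ {p ∈ ℤ³ : |p| > p_F + 3r} are finite sets such that |x − y| > r for all distinct x, y ∈ H ∪ P, and such that every q ∈ H ∪ P has some coordinate i ∈ {1,2,3} with ε·p_F² ≤ q_i² ≤ (1 − ε)·p_F², then the indicator function f of H ∪ P satisfies |𝓑[f](q)| ≥ C·p_F for every q ∈ H ∪ P. -/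

import Mathlib

open Real

/-- The Euclidean norm of a lattice point in `ℤ^d`. -/
noncomputable def zNorm {d : ℕ} (p : Fin d → ℤ) : ℝ := Real.sqrt (∑ i, ((p i : ℝ)) ^ 2)

/-- The indicator `χ` of the Fermi ball of radius `p_F`. -/
noncomputable def chi {d : ℕ} (pF : ℝ) (p : Fin d → ℤ) : ℝ := if zNorm p ≤ pF then 1 else 0

/-- The indicator `χ^⊥ = 1 − χ` of the complement of the Fermi ball. -/
noncomputable def chiP {d : ℕ} (pF : ℝ) (p : Fin d → ℤ) : ℝ := 1 - chi pF p

/-- The limiting coefficient `α^H(h,k)` for holes. -/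
noncomputable def alphaH (pF : ℝ) (h k : Fin 3 → ℤ) : ℝ :=
  (1 / (2 * π)) * chi pF h * chi pF (h + k) * ((2 * π) ^ 3)⁻¹ *
    ∑' r : Fin 3 → ℤ, chi pF r * chiP pF (r + k) *
      (if (∑ i, r i * k i) = ∑ i, h i * k i then 1 else 0)

/-- The limiting coefficient `α^P(p,k)` for particles. -/
noncomputable def alphaP (pF : ℝ) (p k : Fin 3 → ℤ) : ℝ :=
  (1 / (2 * π)) * chiP pF p * chiP pF (p - k) * ((2 * π) ^ 3)⁻¹ *
    ∑' r : Fin 3 → ℤ, chi pF r * chiP pF (r + k) *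
      (if (∑ i, r i * k i) = ∑ i, (p i - k i) * k i then 1 else 0)

/-- The limiting bosonized-interaction operator `𝓑`. -/
noncomputable def Bop (pF : ℝ) (Vh f : (Fin 3 → ℤ) → ℝ) (q : Fin 3 → ℤ) : ℝ :=
  2 * π * ((2 * π) ^ 3)⁻¹ * ∑' k : Fin 3 → ℤ, (Vh k) ^ 2 *
    (alphaH pF (q - k) k * f (q - k) * (1 - f q)
      - alphaH pF q k * f q * (1 - f (q + k))
      + alphaP pF (q + k) k * f (q + k) * (1 - f q)
      - alphaP pF q k * f q * (1 - f (q - k)))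

/-!
At a point `q ∈ H ∪ P` every neighbour `q ± k` with `V̂(k) ≠ 0` lies outside `H ∪ P`, by the
`r`-separation, so all gain terms of `𝓑[f](q)` vanish and `|𝓑[f](q)|` is the sum of the
nonnegative loss terms `V̂(k)² (α^H(q,k) + α^P(q,k))`. It is bounded below by the single term at
the unit step `u = ± e_i` along the good coordinate `i`, pointing away from the plane `q_i = 0`.
For a hole (resp. particle) `α^H(q,u)` (resp. `α^P(q,u)`) counts the lattice points `r` with
`r_i = q_i` (resp. `q_i - u_i`), `|r| ≤ p_F < |r + u|`; in the two remaining coordinates this is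
an annulus `p_F² - (s+1)² < a² + b² ≤ p_F² - s²` with `s ~ |q_i|`. Since `s²` stays away from both
`0` and `p_F²`, choosing for each `a` in a range of length `≳ ε p_F` the largest admissible `b`
produces `≳ ε p_F` such points.
-/

section Lattice

variable {d : ℕ}

lemma zNorm_eq_norm (p : Fin d → ℤ) :
    zNorm p = ‖WithLp.toLp 2 (fun i => (p i : ℝ))‖ := by
  simp [zNorm, EuclideanSpace.norm_eq]

lemma zNorm_nonneg (p : Fin d → ℤ) : 0 ≤ zNorm p := Real.sqrt_nonneg _

lemma zNorm_neg (p : Fin d → ℤ) : zNorm (-p) = zNorm p := by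
  simp [zNorm]

lemma zNorm_add_le (p k : Fin d → ℤ) : zNorm (p + k) ≤ zNorm p + zNorm k := by
  simp only [zNorm_eq_norm, Pi.add_apply, Int.cast_add]
  exact norm_add_le (WithLp.toLp 2 (fun i => (p i : ℝ))) (WithLp.toLp 2 (fun i => (k i : ℝ)))

lemma zNorm_sub_le (p k : Fin d → ℤ) : zNorm p - zNorm k ≤ zNorm (p - k) := by
  simp only [zNorm_eq_norm, Pi.sub_apply, Int.cast_sub]
  exact norm_sub_norm_le (WithLp.toLp 2 (fun i => (p i : ℝ))) (WithLp.toLp 2 (fun i => (k i : ℝ)))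

lemma abs_apply_le_zNorm (p : Fin d → ℤ) (i : Fin d) : |(p i : ℝ)| ≤ zNorm p := by
  simpa [zNorm_eq_norm] using PiLp.norm_apply_le (WithLp.toLp 2 (fun i => (p i : ℝ))) i

lemma finite_setOf_zNorm_le (c : ℝ) : {p : Fin d → ℤ | zNorm p ≤ c}.Finite := by
  refine (Set.Finite.pi fun _ => Set.finite_Icc (-⌈c⌉) ⌈c⌉).subset fun p hp i _ => ?_
  have hc : |(p i : ℝ)| ≤ ⌈c⌉ := ((abs_apply_le_zNorm p i).trans hp).trans (Int.le_ceil c)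
  exact abs_le.mp (by exact_mod_cast hc)

lemma summable_of_zNorm_le {F : (Fin d → ℤ) → ℝ} (c : ℝ) (h : ∀ p, F p ≠ 0 → zNorm p ≤ c) :
    Summable F :=
  summable_of_hasFiniteSupport ((finite_setOf_zNorm_le c).subset h)

lemma add_notMem_and_sub_notMem_of_separated {S : Finset (Fin d → ℤ)} {r : ℝ}
    (hsep : ∀ x ∈ S, ∀ y ∈ S, x ≠ y → r < zNorm (x - y)) {q k : Fin d → ℤ} (hq : q ∈ S)
    (hk0 : k ≠ 0) (hk : zNorm k ≤ r) : q + k ∉ S ∧ q - k ∉ S := by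
  constructor <;> intro hmem
  · have := hsep q hq _ hmem (by simpa using hk0)
    rw [sub_add_cancel_left, zNorm_neg] at this
    linarith
  · have := hsep q hq _ hmem (by simpa [eq_sub_iff_add_eq] using hk0)
    rw [sub_sub_cancel] at this
    linarith

lemma chi_nonneg (pF : ℝ) (p : Fin d → ℤ) : 0 ≤ chi pF p := by
  unfold chi; split_ifs <;> norm_num

lemma chiP_nonneg (pF : ℝ) (p : Fin d → ℤ) : 0 ≤ chiP pF p := by
  unfold chiP chi; split_ifs <;> norm_num

lemma chi_of_le {pF : ℝ} {p : Fin d → ℤ} (h : zNorm p ≤ pF) : chi pF p = 1 := if_pos h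

lemma chi_of_lt {pF : ℝ} {p : Fin d → ℤ} (h : pF < zNorm p) : chi pF p = 0 := if_neg h.not_ge

lemma chiP_of_lt {pF : ℝ} {p : Fin d → ℤ} (h : pF < zNorm p) : chiP pF p = 1 := by
  simp [chiP, chi_of_lt h]

end Lattice

section Shift

variable {d : ℕ}

def shift (i : Fin d) (v : Fin d → ℤ) : Fin d → ℤ := fun j => v (j - i)

lemma shift_add (i : Fin d) (v w : Fin d → ℤ) : shift i v + shift i w = shift i (v + w) := rfl

@[simp]
lemma shift_apply_add [NeZero d] (i j : Fin d) (v : Fin d → ℤ) : shift i v (j + i) = v j := by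
  simp [shift]

lemma sum_mul_shift [NeZero d] (i : Fin d) (w v : Fin d → ℤ) :
    ∑ j, w j * shift i v j = ∑ j, w (j + i) * v j :=
  Fintype.sum_equiv (Equiv.subRight i) _ _ fun j => by simp [shift]

lemma sum_shift_mul_shift [NeZero d] (i : Fin d) (v w : Fin d → ℤ) :
    ∑ j, shift i v j * shift i w j = ∑ j, v j * w j := by
  simp [sum_mul_shift]

lemma zNorm_shift [NeZero d] (i : Fin d) (v : Fin d → ℤ) : zNorm (shift i v) = zNorm v := by
  unfold zNorm
  congr 1
  exact Fintype.sum_equiv (Equiv.subRight i) _ _ fun _ => rfl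

end Shift

lemma zNorm_vec3 (x y z : ℤ) : zNorm ![x, y, z] = √((x : ℝ) ^ 2 + y ^ 2 + z ^ 2) := by
  simp [zNorm, Fin.sum_univ_three]

section Annulus

lemma sq_floor_sqrt_mem_Ioc {w s : ℝ} (hs : 0 ≤ s) (hw : 0 ≤ w) (hws : w ≤ (s + 1) ^ 2) :
    (⌊√w⌋₊ : ℝ) ^ 2 ∈ Set.Ioc (w - (2 * s + 1)) w := by
  have hx := Real.sq_sqrt hw
  have hxs : √w ≤ s + 1 := Real.sqrt_le_left (by linarith) |>.mpr hws
  have hlt := Nat.lt_floor_add_one (√w)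
  have hle := Nat.floor_le (Real.sqrt_nonneg w)
  refine ⟨?_, by nlinarith [Nat.cast_nonneg (α := ℝ) ⌊√w⌋₊]⟩
  rcases lt_or_ge (√w) 1 with h1 | h1
  · nlinarith [Real.sqrt_nonneg w]
  · nlinarith

lemma div_le_sqrt_sub_sqrt_sub {B c m p : ℝ} (hp : 0 < p) (hm : 0 ≤ m) (hB : B ≤ p ^ 2)
    (hmB : m ≤ B) (hmc : m ≤ c) : m / (2 * p) ≤ √B - √(B - c) := by
  have hU := Real.sq_sqrt (hm.trans hmB)
  have hUp : √B ≤ p := Real.sqrt_le_left hp.le |>.mpr hB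
  rw [div_le_iff₀ (by positivity)]
  rcases le_total (B - c) 0 with h | h
  · rw [Real.sqrt_eq_zero_of_nonpos h]
    nlinarith [Real.sqrt_nonneg B]
  · have hL := Real.sq_sqrt h
    have hLU : √(B - c) ≤ √B := Real.sqrt_le_sqrt (by linarith)
    nlinarith [Real.sqrt_nonneg (B - c)]

lemma sub_sub_one_lt_card_Ioc_floor {L U : ℝ} (hL : 0 ≤ L) (hLU : L ≤ U) :
    U - L - 1 < (Finset.Ioc ⌊L⌋₊ ⌊U⌋₊).card := by
  rw [Nat.card_Ioc, Nat.cast_sub (Nat.floor_le_floor hLU)]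
  linarith [Nat.lt_floor_add_one U, Nat.floor_le hL]

/-- `√(B - (s+1)²)` is `0` when `B < (s+1)²`: then every `a ≥ 1` up to `√B` qualifies. -/
lemma mem_annulus_of_mem_Ioc_floor {B s : ℝ} (hs : 0 ≤ s) {a : ℕ}
    (ha : a ∈ Finset.Ioc ⌊√(B - (s + 1) ^ 2)⌋₊ ⌊√B⌋₊) :
    B - (2 * s + 1) < (a : ℝ) ^ 2 + ⌊√(B - a ^ 2)⌋₊ ^ 2 ∧
      (a : ℝ) ^ 2 + ⌊√(B - a ^ 2)⌋₊ ^ 2 ≤ B := by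
  obtain ⟨ha₁, ha₂⟩ := Finset.mem_Ioc.mp ha
  rw [Nat.floor_lt (Real.sqrt_nonneg _)] at ha₁
  have ha₀ : (0 : ℝ) < a := (Real.sqrt_nonneg _).trans_lt ha₁
  rw [Nat.le_floor_iff (Real.sqrt_nonneg _), Real.le_sqrt' ha₀] at ha₂
  rw [Real.sqrt_lt' ha₀] at ha₁
  obtain ⟨hb₁, hb₂⟩ := sq_floor_sqrt_mem_Ioc hs (sub_nonneg.mpr ha₂) (by linarith)
  constructor <;> linarith

end Annulus

/-- The number of lattice points `r` of the Fermi ball with `r + k` outside it and `r · k = c`: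
the lattice sum in both `alphaH` and `alphaP`. -/
noncomputable def fermiSliceCount (pF : ℝ) (k : Fin 3 → ℤ) (c : ℤ) : ℝ :=
  ∑' r : Fin 3 → ℤ, chi pF r * chiP pF (r + k) * (if (∑ i, r i * k i) = c then 1 else 0)

section FermiSlice

variable {pF : ℝ}

lemma fermiSliceCount_nonneg (k : Fin 3 → ℤ) (c : ℤ) : 0 ≤ fermiSliceCount pF k c :=
  tsum_nonneg fun r => mul_nonneg (mul_nonneg (chi_nonneg _ _) (chiP_nonneg _ _))
    (by split_ifs <;> norm_num)

lemma card_le_fermiSliceCount {k : Fin 3 → ℤ} {c : ℤ} (T : Finset (Fin 3 → ℤ))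
    (hT : ∀ r ∈ T, zNorm r ≤ pF ∧ pF < zNorm (r + k) ∧ ∑ i, r i * k i = c) :
    (T.card : ℝ) ≤ fermiSliceCount pF k c := by
  have hsum : Summable fun r : Fin 3 → ℤ =>
      chi pF r * chiP pF (r + k) * (if (∑ i, r i * k i) = c then 1 else 0) :=
    summable_of_zNorm_le pF fun r hr => by
      by_contra h
      exact hr (by rw [chi_of_lt (not_le.mp h), zero_mul, zero_mul])
  calc (T.card : ℝ) = ∑ r ∈ T,
        chi pF r * chiP pF (r + k) * (if (∑ i, r i * k i) = c then 1 else 0) := by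
        rw [Finset.card_eq_sum_ones, Nat.cast_sum]
        refine Finset.sum_congr rfl fun r hr => ?_
        obtain ⟨h₁, h₂, h₃⟩ := hT r hr
        rw [chi_of_le h₁, chiP_of_lt h₂, if_pos h₃]
        norm_num
    _ ≤ fermiSliceCount pF k c := hsum.sum_le_tsum T fun r _ =>
        mul_nonneg (mul_nonneg (chi_nonneg _ _) (chiP_nonneg _ _)) (by split_ifs <;> norm_num)

/-- The slice `r_i = σ s` of the Fermi ball leaving it under the step `σ e_i` contains the points
`(σ s, a, ⌊√(p_F² - s² - a²)⌋)` (cyclically placed at `i`), one for each `a` in an interval of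
length `≥ ε p_F / 2`. -/
lemma le_fermiSliceCount_shift (i : Fin 3) {σ s : ℤ} (hσ : σ * σ = 1) (hs : 0 ≤ s)
    {ε : ℝ} (hε : 0 < ε) (hεpF : 4 ≤ ε * pF) (hs₁ : (s : ℝ) ^ 2 ≤ (1 - ε) * pF ^ 2)
    (hs₂ : ε * pF ^ 2 ≤ ((s : ℝ) + 1) ^ 2) :
    ε / 4 * pF ≤ fermiSliceCount pF (shift i ![σ, 0, 0]) s := by
  set B : ℝ := pF ^ 2 - s ^ 2
  set I := Finset.Ioc ⌊√(B - (s + 1) ^ 2)⌋₊ ⌊√B⌋₊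
  set point : ℕ → Fin 3 → ℤ := fun a => shift i ![σ * s, a, ⌊√(B - a ^ 2)⌋₊]
  have hpF : 0 < pF := pos_of_mul_pos_right (by linarith) hε.le
  have hgap : ε / 2 * pF ≤ √B - √(B - (s + 1) ^ 2) := by
    have := div_le_sqrt_sub_sqrt_sub (B := B) hpF (by positivity) (by nlinarith) (by linarith) hs₂
    rwa [show ε * pF ^ 2 / (2 * pF) = ε / 2 * pF by field_simp] at this
  have hcard : ε / 4 * pF ≤ I.card := by
    have := sub_sub_one_lt_card_Ioc_floor (Real.sqrt_nonneg (B - (s + 1) ^ 2))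
      (by linarith : √(B - (s + 1) ^ 2) ≤ √B)
    linarith
  have hinj : Set.InjOn point I := fun a _ a' _ h => by
    simpa [point] using congrFun h (1 + i)
  refine hcard.trans (le_of_eq_of_le (by rw [Finset.card_image_of_injOn hinj])
    (card_le_fermiSliceCount _ fun r hr => ?_))
  obtain ⟨a, ha, rfl⟩ := Finset.mem_image.mp hr
  obtain ⟨h₁, h₂⟩ := mem_annulus_of_mem_Ioc_floor (by exact_mod_cast hs : (0 : ℝ) ≤ s) ha
  have hσ' : (σ : ℝ) * σ = 1 := by exact_mod_cast hσ
  refine ⟨?_, ?_, ?_⟩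
  · rw [zNorm_shift, zNorm_vec3, Real.sqrt_le_left hpF.le]
    push_cast
    nlinarith
  · have hstep : point a + shift i ![σ, 0, 0] = shift i ![σ * (s + 1), a, ⌊√(B - a ^ 2)⌋₊] := by
      rw [shift_add]
      congr 1
      ext j
      fin_cases j <;> simp [mul_add]
    rw [hstep, zNorm_shift, zNorm_vec3, Real.lt_sqrt hpF.le]
    push_cast
    nlinarith
  · simp only [point, sum_shift_mul_shift, Fin.sum_univ_three, Fin.isValue, Matrix.cons_val,
      Matrix.cons_val_zero, Matrix.cons_val_one, mul_zero, add_zero]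
    linear_combination s * hσ

lemma alphaH_eq {h k : Fin 3 → ℤ} (hh : zNorm h ≤ pF) (hhk : zNorm (h + k) ≤ pF) :
    alphaH pF h k = 1 / (2 * π) * ((2 * π) ^ 3)⁻¹ * fermiSliceCount pF k (∑ i, h i * k i) := by
  rw [alphaH, chi_of_le hh, chi_of_le hhk, fermiSliceCount]
  ring

lemma alphaP_eq {p k : Fin 3 → ℤ} (hp : pF < zNorm p) (hpk : pF < zNorm (p - k)) :
    alphaP pF p k =
      1 / (2 * π) * ((2 * π) ^ 3)⁻¹ * fermiSliceCount pF k (∑ i, (p i - k i) * k i) := by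
  rw [alphaP, chiP_of_lt hp, chiP_of_lt hpk, fermiSliceCount]
  ring

lemma alphaH_nonneg (h k : Fin 3 → ℤ) : 0 ≤ alphaH pF h k := by
  have := fermiSliceCount_nonneg (pF := pF) k (∑ i, h i * k i)
  have := chi_nonneg pF h
  have := chi_nonneg pF (h + k)
  rw [alphaH, ← fermiSliceCount]
  positivity

lemma alphaP_nonneg (p k : Fin 3 → ℤ) : 0 ≤ alphaP pF p k := by
  have := fermiSliceCount_nonneg (pF := pF) k (∑ i, (p i - k i) * k i)
  have := chiP_nonneg pF p
  have := chiP_nonneg pF (p - k)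
  rw [alphaP, ← fermiSliceCount]
  positivity

end FermiSlice

section Isolated

variable {pF : ℝ} {Vh f : (Fin 3 → ℤ) → ℝ} {q : Fin 3 → ℤ}

lemma Bop_eq_of_isolated (hfq : f q = 1)
    (hiso : ∀ k, Vh k ≠ 0 → f (q + k) = 0 ∧ f (q - k) = 0) :
    Bop pF Vh f q =
      -(2 * π * ((2 * π) ^ 3)⁻¹ * ∑' k, Vh k ^ 2 * (alphaH pF q k + alphaP pF q k)) := by
  rw [Bop, ← mul_neg, ← tsum_neg]
  congr 2 with k
  by_cases hk : Vh k = 0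
  · simp [hk]
  · rw [hfq, (hiso k hk).1, (hiso k hk).2]
    ring

lemma le_abs_Bop_of_isolated (R : ℝ) (hsupp : ∀ k, R < zNorm k → Vh k = 0) (hfq : f q = 1)
    (hiso : ∀ k, Vh k ≠ 0 → f (q + k) = 0 ∧ f (q - k) = 0) (k₀ : Fin 3 → ℤ) :
    2 * π * ((2 * π) ^ 3)⁻¹ * (Vh k₀ ^ 2 * (alphaH pF q k₀ + alphaP pF q k₀)) ≤
      |Bop pF Vh f q| := by
  have hsum : Summable fun k => Vh k ^ 2 * (alphaH pF q k + alphaP pF q k) :=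
    summable_of_zNorm_le R fun k hk => by
      by_contra h
      exact hk (by rw [hsupp k (not_le.mp h)]; ring)
  rw [Bop_eq_of_isolated hfq hiso, abs_neg]
  refine le_trans ?_ (le_abs_self _)
  gcongr
  exact hsum.le_tsum k₀ fun k _ =>
    mul_nonneg (sq_nonneg _) (add_nonneg (alphaH_nonneg _ _) (alphaP_nonneg _ _))

end Isolated


lemma Int.sign_mul_sign_of_ne_zero {x : ℤ} (hx : x ≠ 0) : x.sign * x.sign = 1 := by
  rw [← Int.sign_mul]
  exact Int.sign_eq_one_of_pos (mul_self_pos.mpr hx)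

/-- The unit vector along the `i`-th axis pointing to the side of the hyperplane `x i = 0`
where `q` lies. -/
def outwardStep (q : Fin 3 → ℤ) (i : Fin 3) : Fin 3 → ℤ := shift i ![(q i).sign, 0, 0]

section OutwardStep

variable {q : Fin 3 → ℤ} {i : Fin 3}

lemma zNorm_outwardStep (hq : q i ≠ 0) : zNorm (outwardStep q i) = 1 := by
  have h : ((q i).sign : ℝ) * (q i).sign = 1 := by exact_mod_cast Int.sign_mul_sign_of_ne_zero hq
  rw [outwardStep, zNorm_shift, zNorm_vec3]
  simp [sq, h]

lemma sum_mul_outwardStep : ∑ j, q j * outwardStep q i j = |q i| := by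
  simp [outwardStep, sum_mul_shift, Fin.sum_univ_three, mul_comm (q i)]

lemma sum_sub_mul_outwardStep (hq : q i ≠ 0) :
    ∑ j, (q j - outwardStep q i j) * outwardStep q i j = |q i| - 1 := by
  simp only [sub_mul, Finset.sum_sub_distrib, sum_mul_outwardStep]
  simp [outwardStep, sum_shift_mul_shift, Fin.sum_univ_three, Int.sign_mul_sign_of_ne_zero hq]

variable {pF ε : ℝ}

lemma le_alphaH_outwardStep (hε : 0 < ε) (hεpF : 4 ≤ ε * pF)
    (hq₁ : ε * pF ^ 2 ≤ (q i : ℝ) ^ 2) (hq₂ : (q i : ℝ) ^ 2 ≤ (1 - ε) * pF ^ 2) (hqi : q i ≠ 0)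
    (hq : zNorm q + 1 ≤ pF) :
    1 / (2 * π) * ((2 * π) ^ 3)⁻¹ * (ε / 4 * pF) ≤ alphaH pF q (outwardStep q i) := by
  have hstep : zNorm (q + outwardStep q i) ≤ pF :=
    (zNorm_add_le _ _).trans (by rwa [zNorm_outwardStep hqi])
  rw [alphaH_eq (by linarith [zNorm_nonneg q]) hstep, sum_mul_outwardStep]
  gcongr
  refine le_fermiSliceCount_shift i (Int.sign_mul_sign_of_ne_zero hqi) (abs_nonneg _) hε hεpF
    ?_ ?_ <;> push_cast
  · rwa [sq_abs]
  · nlinarith [sq_abs (q i : ℝ), abs_nonneg (q i : ℝ)]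

lemma le_alphaP_outwardStep (hε : 0 < ε) (hεpF : 4 ≤ ε * pF)
    (hq₁ : ε * pF ^ 2 ≤ (q i : ℝ) ^ 2) (hq₂ : (q i : ℝ) ^ 2 ≤ (1 - ε) * pF ^ 2) (hqi : q i ≠ 0)
    (hq : pF + 1 < zNorm q) :
    1 / (2 * π) * ((2 * π) ^ 3)⁻¹ * (ε / 4 * pF) ≤ alphaP pF q (outwardStep q i) := by
  have hstep : pF < zNorm (q - outwardStep q i) := by
    linarith [zNorm_sub_le q (outwardStep q i), zNorm_outwardStep hqi]
  have habs : (1 : ℝ) ≤ |(q i : ℝ)| := by exact_mod_cast Int.one_le_abs hqi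
  rw [alphaP_eq (by linarith) hstep, sum_sub_mul_outwardStep hqi]
  gcongr
  refine le_fermiSliceCount_shift i (Int.sign_mul_sign_of_ne_zero hqi)
    (sub_nonneg.mpr (Int.one_le_abs hqi)) hε hεpF ?_ ?_ <;> push_cast
  · nlinarith [sq_abs (q i : ℝ)]
  · simpa using hq₁

end OutwardStep

theorem stmt9_general (r : ℕ) (hr : 1 ≤ r) (ε : ℝ) (hε0 : 0 < ε)
    (Vh : (Fin 3 → ℤ) → ℝ)
    (hsupp : ∀ k, (r : ℝ) < zNorm k → Vh k = 0)
    (h0 : Vh 0 = 0)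
    (hrot : ∀ k k', zNorm k = zNorm k' → Vh k = Vh k')
    (hpos : ∀ m : ℤ, 1 ≤ m → m ≤ (r : ℤ) → 0 < Vh ![0, 0, m]) :
    ∃ C : ℝ, 0 < C ∧ ∃ P₀ : ℝ, 1 ≤ P₀ ∧
      ∀ pF : ℝ, P₀ ≤ pF →
        ∀ H P : Finset (Fin 3 → ℤ),
          (∀ h ∈ H, zNorm h < pF - 3 * r) →
          (∀ p ∈ P, pF + 3 * r < zNorm p) →
          (∀ x ∈ H ∪ P, ∀ y ∈ H ∪ P, x ≠ y → (r : ℝ) < zNorm (x - y)) →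
          (∀ q ∈ H ∪ P, ∃ i : Fin 3,
            ε * pF ^ 2 ≤ ((q i : ℝ)) ^ 2 ∧ ((q i : ℝ)) ^ 2 ≤ (1 - ε) * pF ^ 2) →
          ∀ q ∈ H ∪ P,
            C * pF ≤ |Bop pF Vh (fun p => if p ∈ H ∪ P then 1 else 0) q| := by
  have hv : 0 < Vh ![0, 0, 1] := hpos 1 le_rfl (by exact_mod_cast hr)
  refine ⟨Vh ![0, 0, 1] ^ 2 * ε / (4 * (2 * π) ^ 6), by positivity, max 1 (4 / ε),
    le_max_left _ _, fun pF hpF H P hH hP hsep hcoord q hq => ?_⟩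
  have hεpF : 4 ≤ ε * pF := (div_le_iff₀' hε0).mp ((le_max_right _ _).trans hpF)
  have hr₁ : (1 : ℝ) ≤ r := by exact_mod_cast hr
  obtain ⟨i, hq₁, hq₂⟩ := hcoord q hq
  have hqi : q i ≠ 0 := fun h => by
    simp only [h, Int.cast_zero, zero_pow two_ne_zero] at hq₁
    nlinarith
  have hVu : Vh (outwardStep q i) = Vh ![0, 0, 1] :=
    hrot _ _ (by rw [zNorm_outwardStep hqi, zNorm_vec3]; norm_num)
  have hα : 1 / (2 * π) * ((2 * π) ^ 3)⁻¹ * (ε / 4 * pF) ≤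
      alphaH pF q (outwardStep q i) + alphaP pF q (outwardStep q i) := by
    rcases Finset.mem_union.mp hq with hqH | hqP
    · linarith [le_alphaH_outwardStep hε0 hεpF hq₁ hq₂ hqi (by linarith [hH q hqH]),
        alphaP_nonneg (pF := pF) q (outwardStep q i)]
    · linarith [le_alphaP_outwardStep hε0 hεpF hq₁ hq₂ hqi (by linarith [hP q hqP]),
        alphaH_nonneg (pF := pF) q (outwardStep q i)]
  have hiso (k : Fin 3 → ℤ) (hk : Vh k ≠ 0) :
      (if q + k ∈ H ∪ P then (1 : ℝ) else 0) = 0 ∧ (if q - k ∈ H ∪ P then (1 : ℝ) else 0) = 0 := by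
    have := add_notMem_and_sub_notMem_of_separated hsep hq (by rintro rfl; exact hk h0)
      (not_lt.mp (mt (hsupp k) hk))
    simp [this]
  calc Vh ![0, 0, 1] ^ 2 * ε / (4 * (2 * π) ^ 6) * pF
      = 2 * π * ((2 * π) ^ 3)⁻¹ * (Vh (outwardStep q i) ^ 2 *
          (1 / (2 * π) * ((2 * π) ^ 3)⁻¹ * (ε / 4 * pF))) := by
        rw [hVu]; field_simp
    _ ≤ _ := by gcongr
    _ ≤ _ := le_abs_Bop_of_isolated r hsupp (by simp [hq]) hiso _

/-- Lower bound for `𝓑` on well-chosen initial data: for a rotationally symmetric `V̂`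
supported in the ball of radius `r`, even, vanishing at `0`, positive on `(0,0,m)` for
`1 ≤ m ≤ r`, there are `C > 0` and `P₀ ≥ 1` such that for all `p_F ≥ P₀` and all finite
sets `H` (inside the Fermi ball, away from the surface) and `P` (outside, away from the
surface) that are `r`-separated and whose points have a coordinate `q_i` with
`ε·p_F² ≤ q_i² ≤ (1−ε)·p_F²`, the indicator `f` of `H ∪ P` satisfies
`|𝓑[f](q)| ≥ C·p_F` for all `q ∈ H ∪ P`. -/
theorem stmt9 (r : ℕ) (hr : 1 ≤ r) (ε : ℝ) (hε0 : 0 < ε) (hε1 : ε < 1)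
    (Vh : (Fin 3 → ℤ) → ℝ)
    (hsupp : ∀ k, (r : ℝ) < zNorm k → Vh k = 0)
    (hsymm : ∀ k, Vh (-k) = Vh k)
    (h0 : Vh 0 = 0)
    (hrot : ∀ k k', zNorm k = zNorm k' → Vh k = Vh k')
    (hpos : ∀ m : ℤ, 1 ≤ m → m ≤ (r : ℤ) → 0 < Vh ![0, 0, m]) :
    ∃ C : ℝ, 0 < C ∧ ∃ P₀ : ℝ, 1 ≤ P₀ ∧
      ∀ pF : ℝ, P₀ ≤ pF →
        ∀ H P : Finset (Fin 3 → ℤ),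
          (∀ h ∈ H, zNorm h < pF - 3 * r) →
          (∀ p ∈ P, pF + 3 * r < zNorm p) →
          (∀ x ∈ H ∪ P, ∀ y ∈ H ∪ P, x ≠ y → (r : ℝ) < zNorm (x - y)) →
          (∀ q ∈ H ∪ P, ∃ i : Fin 3,
            ε * pF ^ 2 ≤ ((q i : ℝ)) ^ 2 ∧ ((q i : ℝ)) ^ 2 ≤ (1 - ε) * pF ^ 2) →
          ∀ q ∈ H ∪ P,
            C * pF ≤ |Bop pF Vh (fun p => if p ∈ H ∪ P then 1 else 0) q| :=
  stmt9_general r hr ε hε0 Vh hsupp h0 hrot hpos
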